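/- Define F(τ₁) = α·τ₁·log(1 + (h₁/σ²)·E₁/τ₁) + (1−α)·(S−τ₁)·log(1 + (h₂/σ²)·E₂/(S−τ₁)) on (0, S), where S = T − τ_AP > 0, α ∈ (0,1), h₁,h₂,E₁,E₂,σ² > 0. Then F is strictly concave on (0,S) and its derivative has exactly one zero in (0,S), which is the unique maximizer of F. -/

import Mathlib

/-!
Writing `cᵢ = hᵢ Eᵢ / σ²`, the objective is `α g(c₁, τ) + (1 - α) g(c₂, S - τ)` with
`g(c, t) = t log(1 + c / t)`. Since `∂ₜg(c, t) = log(1 + c / t) - c / (t + c)` is strictly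
decreasing in `t > 0` and tends to `+∞` as `t → 0⁺`, the derivative of the objective is strictly
decreasing on `(0, S)`, tends to `+∞` at `0⁺` and to `-∞` at `S⁻`. Strict concavity follows, the
intermediate value theorem gives a zero of the derivative, strict monotonicity makes it unique,
and concavity makes the critical point a maximizer.
-/

open Real Set Filter Topology

noncomputable def throughput (c t : ℝ) : ℝ := t * log (1 + c / t)

noncomputable def throughputDeriv (c t : ℝ) : ℝ := log (1 + c / t) - c / (t + c)

section throughput

variable {c t : ℝ}

lemma hasDerivAt_log_one_add_div (hc : 0 ≤ c) (ht : 0 < t) :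
    HasDerivAt (fun t => log (1 + c / t)) (-c / (t * (t + c))) t := by
  have hpos : 0 < 1 + c / t := by positivity
  have h := (((hasDerivAt_inv ht.ne').const_mul c).const_add 1).log hpos.ne'
  simp only [← div_eq_mul_inv] at h
  convert h using 1
  field_simp

lemma hasDerivAt_throughput (hc : 0 ≤ c) (ht : 0 < t) :
    HasDerivAt (throughput c) (throughputDeriv c t) t := by
  refine ((hasDerivAt_id t).mul (hasDerivAt_log_one_add_div hc ht)).congr_deriv ?_
  have : t + c ≠ 0 := by positivity
  simp only [throughputDeriv, id]
  field_simp
  ring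

lemma hasDerivAt_throughputDeriv (hc : 0 ≤ c) (ht : 0 < t) :
    HasDerivAt (throughputDeriv c) (-c ^ 2 / (t * (t + c) ^ 2)) t := by
  have htc : t + c ≠ 0 := by positivity
  have h := (hasDerivAt_const t c).div ((hasDerivAt_id t).add_const c) htc
  refine ((hasDerivAt_log_one_add_div hc ht).sub h).congr_deriv ?_
  simp only [id]
  field_simp
  ring

lemma strictAntiOn_throughputDeriv (hc : 0 < c) : StrictAntiOn (throughputDeriv c) (Ioi 0) := by
  refine strictAntiOn_of_hasDerivWithinAt_neg (convex_Ioi 0)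
    (fun t ht => (hasDerivAt_throughputDeriv hc.le ht).continuousAt.continuousWithinAt)
    (fun t ht => (hasDerivAt_throughputDeriv hc.le (interior_subset ht)).hasDerivWithinAt) ?_
  intro t ht
  rw [interior_Ioi] at ht
  have : 0 < c ^ 2 / (t * (t + c) ^ 2) := by have : (0 : ℝ) < t := ht; positivity
  rw [neg_div]
  linarith

lemma tendsto_throughputDeriv_nhdsGT_zero (hc : 0 < c) :
    Tendsto (throughputDeriv c) (𝓝[>] 0) atTop := by
  have hlog : Tendsto (fun t => log (1 + c / t)) (𝓝[>] 0) atTop :=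
    tendsto_log_atTop.comp <| tendsto_atTop_add_const_left _ 1 <|
      (tendsto_inv_nhdsGT_zero.const_mul_atTop hc).congr fun t => (div_eq_mul_inv c t).symm
  have hbdd : ∀ᶠ t in 𝓝[>] 0, -1 ≤ -(c / (t + c)) := by
    filter_upwards [self_mem_nhdsWithin] with t (ht : 0 < t)
    rw [neg_le_neg_iff, div_le_one (by positivity)]
    linarith
  exact tendsto_atTop_add_right_of_le' _ (-1) hlog hbdd

end throughput

noncomputable def weightedThroughput (w₁ w₂ c₁ c₂ S τ : ℝ) : ℝ :=
  w₁ * throughput c₁ τ + w₂ * throughput c₂ (S - τ)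

noncomputable def weightedThroughputDeriv (w₁ w₂ c₁ c₂ S τ : ℝ) : ℝ :=
  w₁ * throughputDeriv c₁ τ - w₂ * throughputDeriv c₂ (S - τ)

section weightedThroughput

variable {w₁ w₂ c₁ c₂ S τ : ℝ}

lemma hasDerivAt_weightedThroughput (hc₁ : 0 ≤ c₁) (hc₂ : 0 ≤ c₂) (hτ : τ ∈ Ioo 0 S) :
    HasDerivAt (weightedThroughput w₁ w₂ c₁ c₂ S) (weightedThroughputDeriv w₁ w₂ c₁ c₂ S τ) τ := by
  have h₂ := (hasDerivAt_throughput hc₂ (sub_pos.2 hτ.2)).comp τ ((hasDerivAt_id τ).const_sub S)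
  refine (((hasDerivAt_throughput hc₁ hτ.1).const_mul w₁).add (h₂.const_mul w₂)).congr_deriv ?_
  simp only [weightedThroughputDeriv]
  ring

lemma continuousOn_weightedThroughputDeriv (hc₁ : 0 ≤ c₁) (hc₂ : 0 ≤ c₂) :
    ContinuousOn (weightedThroughputDeriv w₁ w₂ c₁ c₂ S) (Ioo 0 S) := by
  intro τ hτ
  have h₁ := (hasDerivAt_throughputDeriv hc₁ hτ.1).continuousAt
  have h₂ := (hasDerivAt_throughputDeriv hc₂ (sub_pos.2 hτ.2)).continuousAt.comp
    (continuous_sub_left S).continuousAt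
  exact ((continuousAt_const.mul h₁).sub (continuousAt_const.mul h₂)).continuousWithinAt

lemma strictAntiOn_weightedThroughputDeriv (hw₁ : 0 < w₁) (hw₂ : 0 < w₂) (hc₁ : 0 < c₁)
    (hc₂ : 0 < c₂) : StrictAntiOn (weightedThroughputDeriv w₁ w₂ c₁ c₂ S) (Ioo 0 S) := by
  intro x hx y hy hxy
  have h₁ := strictAntiOn_throughputDeriv hc₁ hx.1 hy.1 hxy
  have h₂ := strictAntiOn_throughputDeriv hc₂ (sub_pos.2 hy.2) (sub_pos.2 hx.2)
    (sub_lt_sub_left hxy S)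
  simp only [weightedThroughputDeriv]
  nlinarith

lemma tendsto_const_sub_nhdsLT (S : ℝ) : Tendsto (S - ·) (𝓝[<] S) (𝓝[>] 0) := by
  have h := (continuous_sub_left S).continuousWithinAt.tendsto_nhdsWithin
    (x := S) (s := Iio S) (t := Ioi 0) fun τ hτ => sub_pos.2 hτ
  rwa [sub_self] at h

lemma tendsto_weightedThroughputDeriv_nhdsGT_zero (hw₁ : 0 < w₁) (hc₁ : 0 < c₁) (hc₂ : 0 ≤ c₂)
    (hS : 0 < S) : Tendsto (weightedThroughputDeriv w₁ w₂ c₁ c₂ S) (𝓝[>] 0) atTop := by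
  have h₂ : Tendsto (fun τ => w₂ * throughputDeriv c₂ (S - τ)) (𝓝[>] 0)
      (𝓝 (w₂ * throughputDeriv c₂ (S - 0))) :=
    (((hasDerivAt_throughputDeriv hc₂ (by simpa using hS)).continuousAt.comp
      (continuous_sub_left S).continuousAt).const_mul w₂).tendsto.mono_left nhdsWithin_le_nhds
  exact ((tendsto_throughputDeriv_nhdsGT_zero hc₁).const_mul_atTop hw₁).atTop_add h₂.neg
    |>.congr fun τ => (sub_eq_add_neg _ _).symm

lemma tendsto_weightedThroughputDeriv_nhdsLT (hw₂ : 0 < w₂) (hc₁ : 0 ≤ c₁) (hc₂ : 0 < c₂)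
    (hS : 0 < S) : Tendsto (weightedThroughputDeriv w₁ w₂ c₁ c₂ S) (𝓝[<] S) atBot := by
  have h₁ : Tendsto (fun τ => w₁ * throughputDeriv c₁ τ) (𝓝[<] S)
      (𝓝 (w₁ * throughputDeriv c₁ S)) :=
    ((hasDerivAt_throughputDeriv hc₁ hS).continuousAt.const_mul w₁).tendsto.mono_left
      nhdsWithin_le_nhds
  have h₂ := ((tendsto_throughputDeriv_nhdsGT_zero hc₂).comp
    (tendsto_const_sub_nhdsLT S)).const_mul_atTop hw₂
  exact h₁.add_atBot (tendsto_neg_atTop_atBot.comp h₂) |>.congr fun τ => (sub_eq_add_neg _ _).symm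

end weightedThroughput

lemma ConcaveOn.isMaxOn_of_hasDerivAt_zero {s : Set ℝ} {f : ℝ → ℝ} {x : ℝ} (hf : ConcaveOn ℝ s f)
    (hx : x ∈ s) (hfx : HasDerivAt f 0 x) : IsMaxOn f s x := by
  intro y hy
  rcases lt_trichotomy y x with hyx | rfl | hxy
  · exact (slope_nonneg_iff_of_le hyx.le).1 (hf.le_slope_of_hasDerivAt hy hx hyx hfx)
  · exact le_refl (f y)
  · exact (slope_nonpos_iff_of_le hxy.le).1 (hf.slope_le_of_hasDerivAt hx hy hxy hfx)

/-- The time-allocation sub-problem objective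
`F(τ₁) = α τ₁ log(1 + (h₁/σ²) E₁/τ₁) + (1−α)(S−τ₁) log(1 + (h₂/σ²) E₂/(S−τ₁))`
is strictly concave on `(0,S)` and its derivative has a unique zero in `(0,S)`,
which is the unique maximizer of `F` on `(0,S)`. -/
theorem time_allocation_unique_max (α h₁ h₂ E₁ E₂ σ2 S : ℝ)
    (hα : α ∈ Set.Ioo (0 : ℝ) 1) (hh₁ : 0 < h₁) (hh₂ : 0 < h₂)
    (hE₁ : 0 < E₁) (hE₂ : 0 < E₂) (hσ : 0 < σ2) (hS : 0 < S) :
    StrictConcaveOn ℝ (Set.Ioo 0 S)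
      (fun τ₁ : ℝ => α * τ₁ * Real.log (1 + (h₁ / σ2) * (E₁ / τ₁)) +
        (1 - α) * (S - τ₁) * Real.log (1 + (h₂ / σ2) * (E₂ / (S - τ₁)))) ∧
    ∃ τ ∈ Set.Ioo (0 : ℝ) S,
      deriv (fun τ₁ : ℝ => α * τ₁ * Real.log (1 + (h₁ / σ2) * (E₁ / τ₁)) +
        (1 - α) * (S - τ₁) * Real.log (1 + (h₂ / σ2) * (E₂ / (S - τ₁)))) τ = 0 ∧
      (∀ τ' ∈ Set.Ioo (0 : ℝ) S,
        deriv (fun τ₁ : ℝ => α * τ₁ * Real.log (1 + (h₁ / σ2) * (E₁ / τ₁)) +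
          (1 - α) * (S - τ₁) * Real.log (1 + (h₂ / σ2) * (E₂ / (S - τ₁)))) τ' = 0 → τ' = τ) ∧
      ∀ t ∈ Set.Ioo (0 : ℝ) S,
        (α * t * Real.log (1 + (h₁ / σ2) * (E₁ / t)) +
          (1 - α) * (S - t) * Real.log (1 + (h₂ / σ2) * (E₂ / (S - t)))) ≤
        (α * τ * Real.log (1 + (h₁ / σ2) * (E₁ / τ)) +
          (1 - α) * (S - τ) * Real.log (1 + (h₂ / σ2) * (E₂ / (S - τ)))) := by
  obtain ⟨hα₀, hα₁⟩ := hα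
  have hc₁ : 0 < h₁ / σ2 * E₁ := by positivity
  have hc₂ : 0 < h₂ / σ2 * E₂ := by positivity
  have hw₂ : 0 < 1 - α := sub_pos.2 hα₁
  have hF : ∀ t, α * t * log (1 + h₁ / σ2 * (E₁ / t)) +
      (1 - α) * (S - t) * log (1 + h₂ / σ2 * (E₂ / (S - t))) =
      weightedThroughput α (1 - α) (h₁ / σ2 * E₁) (h₂ / σ2 * E₂) S t := fun t => by
    simp only [weightedThroughput, throughput, mul_div_assoc, mul_assoc]
  simp only [hF]
  set F := weightedThroughput α (1 - α) (h₁ / σ2 * E₁) (h₂ / σ2 * E₂) S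
  set F' := weightedThroughputDeriv α (1 - α) (h₁ / σ2 * E₁) (h₂ / σ2 * E₂) S
  have hF' : ∀ τ ∈ Ioo 0 S, HasDerivAt F (F' τ) τ := fun τ hτ =>
    hasDerivAt_weightedThroughput hc₁.le hc₂.le hτ
  have hanti : StrictAntiOn F' (Ioo 0 S) :=
    strictAntiOn_weightedThroughputDeriv hα₀ hw₂ hc₁ hc₂
  have hconc : StrictConcaveOn ℝ (Ioo 0 S) F := by
    refine StrictAntiOn.strictConcaveOn_of_deriv (convex_Ioo 0 S)
      (fun τ hτ => (hF' τ hτ).continuousAt.continuousWithinAt) ?_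
    rw [interior_Ioo]
    exact hanti.congr fun τ hτ => (hF' τ hτ).deriv.symm
  obtain ⟨τ, hτ, hτ₀⟩ := isPreconnected_Ioo.intermediate_value_Iii
    (le_principal_iff.2 (Ioo_mem_nhdsLT hS)) (le_principal_iff.2 (Ioo_mem_nhdsGT hS))
    (continuousOn_weightedThroughputDeriv hc₁.le hc₂.le)
    (tendsto_weightedThroughputDeriv_nhdsLT hw₂ hc₁.le hc₂ hS)
    (tendsto_weightedThroughputDeriv_nhdsGT_zero hα₀ hc₁ hc₂.le hS) (mem_univ 0)
  have hτmax : HasDerivAt F 0 τ := hτ₀ ▸ hF' τ hτ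
  refine ⟨hconc, τ, hτ, hτmax.deriv, fun τ' hτ' h₀ => hanti.injOn hτ' hτ ?_,
    hconc.concaveOn.isMaxOn_of_hasDerivAt_zero hτ hτmax⟩
  exact ((hF' τ' hτ').deriv.symm.trans h₀).trans hτ₀.symm
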